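/- Let ρ = 1/(Ne) with N ≥ 1, let α ≥ 2 and a = ρ²/(2α). Let σ be a function with N^{-1} ≤ σ(t)/t ≤ 1, and set σ_a(t) = σ(t+a) and G_a(x,t) = (t+a)^{-n/2} e^{-|x|²/(4(t+a))}. Then for all (x,t) ∈ B(0,2ρ) × [0, ρ²/(2α)], one has σ_a(t)^{-α+1} G_a(x,t) ≥ α^{α+n/2-1} N^{2α+n-2}. -/

import Mathlib

lemma log_chord_aux {u : ℝ} (h1 : 1 ≤ u) (h2 : u ≤ 2) :
    (u - 1) * Real.log 2 ≤ Real.log u := by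
  have hconc := strictConcaveOn_log_Ioi.concaveOn
  have h := hconc.2 (Set.mem_Ioi.mpr (by norm_num : (0:ℝ) < 1))
    (Set.mem_Ioi.mpr (by norm_num : (0:ℝ) < 2))
    (sub_nonneg.mpr h2) (sub_nonneg.mpr h1) (by ring)
  rw [smul_eq_mul, smul_eq_mul, smul_eq_mul, smul_eq_mul, Real.log_one,
    show (2 - u) * 1 + (u - 1) * 2 = u by ring] at h
  linarith

set_option maxHeartbeats 1000000 in
/-- With N ≥ 1, ρ = 1/(Ne), α ≥ 2, a = ρ²/(2α), and σ satisfying N⁻¹ ≤ σ(t)/t ≤ 1,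
for (x,t) ∈ B(0,2ρ) × [0, ρ²/(2α)] one has
σ_a(t)^{-α+1} G_a(x,t) ≥ α^{α+n/2-1} N^{2α+n-2}, where G_a(x,t)=(t+a)^{-n/2}e^{-|x|²/(4(t+a))}. -/
theorem stmt_3 (n : ℕ) (N α ρ a : ℝ) (hN : 1 ≤ N) (hα : 2 ≤ α)
    (hρ : ρ = 1 / (N * Real.exp 1)) (ha : a = ρ ^ 2 / (2 * α))
    (σ : ℝ → ℝ) (hσpos : ∀ t > (0 : ℝ), 0 < σ t)
    (hσ : ∀ t > (0 : ℝ), N⁻¹ ≤ σ t / t ∧ σ t / t ≤ 1) :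
    ∀ (x : EuclideanSpace ℝ (Fin n)) (t : ℝ), ‖x‖ < 2 * ρ → t ∈ Set.Icc 0 (ρ ^ 2 / (2 * α)) →
      α ^ (α + (n : ℝ) / 2 - 1) * N ^ (2 * α + (n : ℝ) - 2) ≤
        (σ (t + a)) ^ (-α + 1) *
          ((t + a) ^ (-(n : ℝ) / 2) * Real.exp (-‖x‖ ^ 2 / (4 * (t + a)))) := by
  intro x t hx ht
  obtain ⟨ht0, ht1⟩ := ht
  have hα0 : (0:ℝ) < α := by linarith
  have hN0 : (0:ℝ) < N := by linarith
  have hE : (0:ℝ) < Real.exp 1 := Real.exp_pos 1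
  have hnx : n = 0 → ‖x‖ = 0 := by
    intro h; subst h; simp [EuclideanSpace.norm_eq]
  have hρ0 : 0 < ρ := by rw [hρ]; positivity
  have ha0 : 0 < a := by rw [ha]; positivity
  set s := t + a with hs
  have hs0 : 0 < s := by positivity
  have hsa : a ≤ s := by simp only [hs]; linarith
  have hs2a : s ≤ 2 * a := by
    have hta : t ≤ a := by rw [ha]; exact ht1
    simp only [hs]; linarith
  -- sigma bounds
  obtain ⟨hσ1, hσ2⟩ := hσ s hs0
  have hσpos' := hσpos s hs0
  have hσle : σ s ≤ s := (div_le_one hs0).mp hσ2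
  have hstep1 : s ^ (-α + 1) ≤ (σ s) ^ (-α + 1) :=
    Real.rpow_le_rpow_of_nonpos hσpos' hσle (by linarith)
  have hrest0 : 0 ≤ s ^ (-(n:ℝ)/2) * Real.exp (-‖x‖ ^ 2 / (4 * s)) := by positivity
  refine le_trans ?_ (mul_le_mul_of_nonneg_right hstep1 hrest0)
  set c := ‖x‖ ^ 2 with hc
  have hc0 : 0 ≤ c := by positivity
  have hcρ : c ≤ 4 * ρ ^ 2 := by
    have h0 : 0 ≤ ‖x‖ := norm_nonneg x
    rw [hc, show (4:ℝ) * ρ ^ 2 = (2 * ρ) ^ 2 by ring]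
    exact pow_le_pow_left₀ h0 hx.le 2
  set β := α + (n:ℝ)/2 - 1 with hβ
  have hn0 : (0:ℝ) ≤ (n:ℝ) := Nat.cast_nonneg n
  have hβ0 : (0:ℝ) < β := by simp only [hβ]; linarith
  have hexpeq : -α + 1 + (-(n:ℝ)/2) = -β := by simp only [hβ]; ring
  have hcomb : s ^ (-α + 1) * (s ^ (-(n:ℝ)/2) * Real.exp (-c / (4 * s)))
      = s ^ (-β) * Real.exp (-c / (4 * s)) := by
    rw [← mul_assoc, ← Real.rpow_add hs0, hexpeq]
  rw [hcomb]
  have hexp2 : 2 * α + (n:ℝ) - 2 = 2 * β := by simp only [hβ]; ring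
  have hexp1 : α + (n:ℝ)/2 - 1 = β := rfl
  rw [hexp2]
  have hL : (0:ℝ) < α ^ β * N ^ (2*β) := by positivity
  have hR : (0:ℝ) < s ^ (-β) * Real.exp (-c / (4 * s)) := by positivity
  rw [← Real.log_le_log_iff hL hR,
    Real.log_mul (by positivity) (by positivity),
    Real.log_mul (by positivity) (by positivity),
    Real.log_rpow hα0, Real.log_rpow hN0, Real.log_rpow hs0, Real.log_exp]
  set u := 2 * a / s with hu
  have hu1 : 1 ≤ u := (one_le_div hs0).mpr hs2a
  have hu2 : u ≤ 2 := by rw [hu, div_le_iff₀ hs0]; linarith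
  clear_value s c β u
  have hsu : u * s = 2 * a := by rw [hu]; field_simp
  have hlogs : Real.log s = Real.log (2*a) - Real.log u := by
    have h := Real.log_div (by positivity : (2*a) ≠ 0) (ne_of_gt hs0)
    rw [← hu] at h
    linarith
  have hlog2a : Real.log (2*a) = -(Real.log α + 2 * Real.log N + 2) := by
    have hE2 : Real.exp 1 ^ 2 = Real.exp 2 := by
      rw [sq, ← Real.exp_add]; norm_num
    have h2a : 2*a = (α * N^2 * Real.exp 1 ^ 2)⁻¹ := by
      rw [ha, hρ]; field_simp
    rw [h2a, Real.log_inv,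
      Real.log_mul (by positivity) (by positivity),
      Real.log_mul (by positivity) (by positivity),
      Real.log_pow, Real.log_pow, Real.log_exp]
    push_cast; ring
  have hcu : c / (4*s) ≤ α * u := by
    rw [div_le_iff₀ (by positivity)]
    have h1 : α * u * (4 * s) = 8 * a * α := by
      rw [show α * u * (4 * s) = 4 * α * (u * s) by ring, hsu]; ring
    have h2 : 8 * a * α = 4 * ρ ^ 2 := by rw [ha]; field_simp; ring
    linarith
  have hcs0 : 0 ≤ c / (4*s) := by positivity
  rw [hlogs, hlog2a]
  have hfin : 0 ≤ 2*β + β * Real.log u - c / (4*s) := ?_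
  · have hexpand : -β * (-(Real.log α + 2 * Real.log N + 2) - Real.log u) + -c / (4*s)
        = β * Real.log α + 2*β*Real.log N + (2*β + β * Real.log u - c/(4*s)) := by ring
    rw [hexpand]; linarith [hfin]
  rcases Nat.eq_zero_or_pos n with h0 | h1
  · have hcz : c = 0 := by rw [hc, hnx h0]; ring
    have hlu : 0 ≤ Real.log u := Real.log_nonneg hu1
    have : 0 ≤ β * Real.log u := mul_nonneg hβ0.le hlu
    rw [hcz]; simp only [zero_div]; linarith
  · have hn1 : (1:ℝ) ≤ (n:ℝ) := by exact_mod_cast h1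
    have hL2 := Real.log_two_gt_d9
    have hL2' : (0:ℝ) ≤ Real.log 2 := by linarith
    have hchord : (u - 1) * Real.log 2 ≤ Real.log u := log_chord_aux hu1 hu2
    have hβu : β * ((u - 1) * Real.log 2) ≤ β * Real.log u :=
      mul_le_mul_of_nonneg_left hchord hβ0.le
    have e1 : 0 ≤ 2*β - α := by simp only [hβ]; linarith
    have hβ32 : (3/2:ℝ) ≤ β := by simp only [hβ]; linarith
    have e2 : 0 ≤ β * Real.log 2 + 2*β - 2*α := by
      have q : 0 ≤ (β - 3/2) * Real.log 2 :=
        mul_nonneg (by linarith) hL2'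
      have hβeq : 2*β - 2*α = (n:ℝ) - 2 := by rw [hβ]; ring
      linarith [q, hL2, hn1, hβeq]
    have p1 : 0 ≤ (2 - u) * (2*β - α) :=
      mul_nonneg (by linarith) e1
    have p2 : 0 ≤ (u - 1) * (β * Real.log 2 + 2*β - 2*α) :=
      mul_nonneg (by linarith) e2
    have hsum : 2*β + β * ((u-1) * Real.log 2) - α * u
        = (2 - u) * (2*β - α) + (u - 1) * (β * Real.log 2 + 2*β - 2*α) := by ring
    linarith [p1, p2, hβu, hcu, hsum]
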